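/- Under assumptions (A1), (A2), (A4) and the testing logic, for every distribution consistent with the data the joint probability P(x=0,z=0|t=1) satisfies max{0, P(y=0,z=0|t=1) − χ̄(1−σ)} ≤ P(x=0,z=0|t=1) ≤ min{ 1−χ̄, P(y=0,z=0|t=1) }, where χ̄ = γ/σ; and these bounds are sharp: each endpoint is attained by some distribution consistent with the data. -/

import Mathlib

/-!
Population model: a pmf `P` on `{0,1}^4` over `(x, y, z, t)` where `x = true` means truly
infected, `y` is the established test result, `z` the new test result, and `t = true` means
the person belongs to the testing pool.  The testing logic requires `z = 1 → t = 1`.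
-/

namespace PaperTest

abbrev Dist := Bool → Bool → Bool → Bool → ℝ

/-- Probability of the event `A` under `P`. -/
noncomputable def pr (P : Dist) (A : Bool → Bool → Bool → Bool → Bool) : ℝ :=
  ∑ x : Bool, ∑ y : Bool, ∑ z : Bool, ∑ t : Bool, if A x y z t then P x y z t else 0

/-- Conditional probability `P(A | B)`. -/
noncomputable def cpr (P : Dist) (A B : Bool → Bool → Bool → Bool → Bool) : ℝ :=
  pr P (fun x y z t => A x y z t && B x y z t) / pr P B

def IsPMF (P : Dist) : Prop :=
  (∀ x y z t, 0 ≤ P x y z t) ∧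
    (∑ x : Bool, ∑ y : Bool, ∑ z : Bool, ∑ t : Bool, P x y z t) = 1

/-- Testing logic: `z = 1` implies `t = 1`, i.e. there is no mass on `z = 1 ∧ t = 0`. -/
def TestLogic (P : Dist) : Prop := ∀ x y, P x y true false = 0

/-- Prevalence `p = P(x=1)`. -/
noncomputable def prev (P : Dist) : ℝ := pr P fun x _ _ _ => x

/-- Sensitivity of the established test, `σ = P(y=1 | x=1)`. -/
noncomputable def sens (P : Dist) : ℝ := cpr P (fun _ y _ _ => y) (fun x _ _ _ => x)

/-- `τ = P(t=1)`. -/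
noncomputable def tau (P : Dist) : ℝ := pr P fun _ _ _ t => t

/-- `γ = P(y=1 | t=1)`. -/
noncomputable def gamma (P : Dist) : ℝ := cpr P (fun _ y _ _ => y) (fun _ _ _ t => t)

/-- `ζ = P(z=1 | t=1)`. -/
noncomputable def zeta (P : Dist) : ℝ := cpr P (fun _ _ z _ => z) (fun _ _ _ t => t)

/-- `χ̄ = γ/σ`, the prevalence in the testing pool. -/
noncomputable def chibar (P : Dist) : ℝ := gamma P / sens P

/-- (A1) non-trivial prevalence. -/
def A1 (P : Dist) : Prop := 0 < prev P ∧ prev P < 1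

/-- (A2) no false positives for the established test: `P(x=0, y=1) = 0`. -/
def A2 (P : Dist) : Prop := pr P (fun x y _ _ => !x && y) = 0

/-- (A3) test monotonicity: `P(x=1 | t=1) ≥ P(x=1 | t=0)`. -/
def A3 (P : Dist) : Prop :=
  cpr P (fun x _ _ _ => x) (fun _ _ _ t => t) ≥ cpr P (fun x _ _ _ => x) (fun _ _ _ t => !t)

/-- (A4) health sufficiency: `P(y=1 | x=1, t=1) = P(y=1 | x=1) = σ`. -/
def A4 (P : Dist) : Prop := cpr P (fun _ y _ _ => y) (fun x _ _ t => x && t) = sens P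

/-- `P(y=1, z=1 | t=1)`. -/
noncomputable def q11 (P : Dist) : ℝ := cpr P (fun _ y z _ => y && z) (fun _ _ _ t => t)

/-- `P(y=1, z=0 | t=1)`. -/
noncomputable def q10 (P : Dist) : ℝ := cpr P (fun _ y z _ => y && !z) (fun _ _ _ t => t)

/-- `P(y=0, z=1 | t=1)`. -/
noncomputable def q01 (P : Dist) : ℝ := cpr P (fun _ y z _ => !y && z) (fun _ _ _ t => t)

/-- `P(y=0, z=0 | t=1)`. -/
noncomputable def q00 (P : Dist) : ℝ := cpr P (fun _ y z _ => !y && !z) (fun _ _ _ t => t)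

/-- `Q` induces the same conditional data distribution `P(y, z | t=1)` and the same
sensitivity `σ` of the established test as `P`. -/
def SameData (P Q : Dist) : Prop :=
  (∀ y0 z0 : Bool,
      cpr Q (fun _ y z _ => (y == y0) && (z == z0)) (fun _ _ _ t => t) =
        cpr P (fun _ y z _ => (y == y0) && (z == z0)) (fun _ _ _ t => t)) ∧
    sens Q = sens P

/-- Assumptions (A1), (A2), (A4), the testing logic, and the maintained regularity
conditions `γ, ζ > 0`, `P(t=1) > 0`, and `γ < σ ≤ 1`. -/
def Setup (P : Dist) : Prop :=
  IsPMF P ∧ TestLogic P ∧ A1 P ∧ A2 P ∧ A4 P ∧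
    0 < gamma P ∧ 0 < zeta P ∧ 0 < tau P ∧ gamma P < sens P ∧ sens P ≤ 1

/-- `Q` is consistent with the data of `P`: it satisfies all assumptions and induces the
same `P(y, z | t=1)` and the same `σ`. -/
def Consistent (P Q : Dist) : Prop := Setup Q ∧ SameData P Q

section Aux

lemma pr_nonneg (P : Dist) (hP : ∀ x y z t, 0 ≤ P x y z t)
    (A : Bool → Bool → Bool → Bool → Bool) : 0 ≤ pr P A := by
  refine Finset.sum_nonneg fun x _ => Finset.sum_nonneg fun y _ =>
    Finset.sum_nonneg fun z _ => Finset.sum_nonneg fun t _ => ?_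
  split
  · exact hP x y z t
  · exact le_refl 0

lemma cpr_t_eq (P : Dist) (A : Bool → Bool → Bool → Bool → Bool) :
    cpr P A (fun _ _ _ t => t) = pr P (fun x y z t => A x y z t && t) / tau P := rfl

lemma tau_atoms (P : Dist) : tau P = P true true true true + P true true false true +
    P true false true true + P true false false true + P false true true true +
    P false true false true + P false false true true + P false false false true := by
  simp [tau, pr, Fintype.sum_bool]; ring

lemma q11_atoms (P : Dist) :
    q11 P = (P true true true true + P false true true true) / tau P := by
  rw [q11, cpr_t_eq]; congr 1; simp [pr, Fintype.sum_bool]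

lemma q10_atoms (P : Dist) :
    q10 P = (P true true false true + P false true false true) / tau P := by
  rw [q10, cpr_t_eq]; congr 1; simp [pr, Fintype.sum_bool]

lemma q01_atoms (P : Dist) :
    q01 P = (P true false true true + P false false true true) / tau P := by
  rw [q01, cpr_t_eq]; congr 1; simp [pr, Fintype.sum_bool]

lemma q00_atoms (P : Dist) :
    q00 P = (P true false false true + P false false false true) / tau P := by
  rw [q00, cpr_t_eq]; congr 1; simp [pr, Fintype.sum_bool]

lemma gamma_atoms (P : Dist) :
    gamma P = (P true true true true + P false true true true +
      P true true false true + P false true false true) / tau P := by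
  rw [gamma, cpr_t_eq]; congr 1; simp [pr, Fintype.sum_bool]; ring

lemma zeta_atoms (P : Dist) :
    zeta P = (P true true true true + P false true true true +
      P true false true true + P false false true true) / tau P := by
  rw [zeta, cpr_t_eq]; congr 1; simp [pr, Fintype.sum_bool]; ring

lemma setup_facts (P : Dist) (h : Setup P) :
    0 < sens P ∧ chibar P * sens P = gamma P ∧ 0 < chibar P ∧ chibar P < 1 ∧
    q11 P + q10 P = gamma P ∧ q11 P + q01 P = zeta P ∧
    q11 P + q10 P + q01 P + q00 P = 1 ∧
    0 ≤ q11 P ∧ 0 ≤ q10 P ∧ 0 ≤ q01 P ∧ 0 ≤ q00 P := by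
  obtain ⟨hpmf, htl, hA1, hA2, hA4, hγpos, hζpos, hτpos, hγσ, hσ1⟩ := h
  have hσpos : 0 < sens P := lt_trans hγpos hγσ
  have hτne : tau P ≠ 0 := ne_of_gt hτpos
  refine ⟨hσpos, div_mul_cancel₀ _ (ne_of_gt hσpos), div_pos hγpos hσpos,
    (div_lt_one hσpos).mpr hγσ, ?_, ?_, ?_, ?_, ?_, ?_, ?_⟩
  · rw [q11_atoms, q10_atoms, gamma_atoms, ← add_div]; ring_nf
  · rw [q11_atoms, q01_atoms, zeta_atoms, ← add_div]; ring_nf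
  · rw [q11_atoms, q10_atoms, q01_atoms, q00_atoms, ← add_div, ← add_div,
      ← add_div, div_eq_one_iff_eq hτne, tau_atoms]; ring
  · rw [q11_atoms]
    have h1 := hpmf.1 true true true true; have h2 := hpmf.1 false true true true
    positivity
  · rw [q10_atoms]
    have h1 := hpmf.1 true true false true; have h2 := hpmf.1 false true false true
    positivity
  · rw [q01_atoms]
    have h1 := hpmf.1 true false true true; have h2 := hpmf.1 false false true true
    positivity
  · rw [q00_atoms]
    have h1 := hpmf.1 true false false true; have h2 := hpmf.1 false false false true
    positivity

lemma cell_tt (P : Dist) : cpr P (fun _ y z _ => (y == true) && (z == true))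
    (fun _ _ _ t => t) = q11 P := by
  rw [q11, cpr_t_eq, cpr_t_eq]; congr 1

lemma cell_tf (P : Dist) : cpr P (fun _ y z _ => (y == true) && (z == false))
    (fun _ _ _ t => t) = q10 P := by
  rw [q10, cpr_t_eq, cpr_t_eq]; congr 1

lemma cell_ft (P : Dist) : cpr P (fun _ y z _ => (y == false) && (z == true))
    (fun _ _ _ t => t) = q01 P := by
  rw [q01, cpr_t_eq, cpr_t_eq]; congr 1

lemma cell_ff (P : Dist) : cpr P (fun _ y z _ => (y == false) && (z == false))
    (fun _ _ _ t => t) = q00 P := by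
  rw [q00, cpr_t_eq, cpr_t_eq]; congr 1

/-- The construction used for sharpness: all mass on `t = 1`, `y = 1` forces `x = 1`,
`P(x=1 | t=1) = χ̄`, and the `x=1, y=0` mass split between `z=0` (mass `a`) and `z=1`. -/
noncomputable def QC (P : Dist) (a : ℝ) : Dist := fun x y z t =>
  if t then
    if x then
      if y then (if z then q11 P else q10 P)
      else (if z then chibar P * (1 - sens P) - a else a)
    else
      if y then 0
      else (if z then q01 P - (chibar P * (1 - sens P) - a) else q00 P - a)
  else 0

lemma QC_main (P : Dist) (h : Setup P) (a : ℝ)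
    (ha0 : 0 ≤ a) (ha1 : a ≤ q00 P)
    (hb0 : 0 ≤ chibar P * (1 - sens P) - a)
    (hb1 : chibar P * (1 - sens P) - a ≤ q01 P) :
    Consistent P (QC P a) ∧
      cpr (QC P a) (fun x _ z _ => !x && !z) (fun _ _ _ t => t) = q00 P - a := by
  obtain ⟨hσpos, hχσ, hχpos, hχ1, hγq, hζq, hsum, h11, h10, h01, h00⟩ := setup_facts P h
  obtain ⟨hpmf, htl, hA1, hA2, hA4, hγpos, hζpos, hτpos, hγσ, hσ1⟩ := h
  have hτQ : tau (QC P a) = 1 := by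
    rw [tau_atoms]; simp [QC]; linarith [hsum]
  have hprev : prev (QC P a) = chibar P := by
    simp [prev, pr, QC, Fintype.sum_bool]
    linear_combination hγq - hχσ
  have hsQ' : sens (QC P a) = gamma P / chibar P := by
    have h1 : pr (QC P a) (fun x y _ _ => (y && x : Bool)) = gamma P := by
      simp [pr, QC, Fintype.sum_bool]; linarith [hγq]
    have h2 : pr (QC P a) (fun x _ _ _ => (x : Bool)) = chibar P := by
      simp [pr, QC, Fintype.sum_bool]; linear_combination hγq - hχσ
    simp only [sens, cpr]
    rw [h1, h2]
  have hsQ : sens (QC P a) = sens P := by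
    rw [hsQ', div_eq_iff (ne_of_gt hχpos)]
    linear_combination -hχσ
  have hγQ : gamma (QC P a) = gamma P := by
    rw [gamma_atoms, hτQ]; simp [QC]; linarith [hγq]
  have hζQ : zeta (QC P a) = zeta P := by
    rw [zeta_atoms, hτQ]; simp [QC]; linarith [hζq]
  simp only [Consistent, Setup, SameData, IsPMF, A1]
  refine ⟨⟨⟨⟨?_, ?_⟩, ?_, ⟨?_, ?_⟩, ?_, ?_, ?_, ?_, ?_, ?_, ?_⟩, ?_, hsQ⟩, ?_⟩
  · -- nonneg
    intro x y z t
    cases x <;> cases y <;> cases z <;> cases t <;> simp [QC] <;> linarith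
  · -- sum = 1
    simp [QC, Fintype.sum_bool]; linarith [hsum]
  · -- TestLogic
    intro x y; cases x <;> cases y <;> simp [QC]
  · rw [hprev]; exact hχpos
  · rw [hprev]; exact hχ1
  · -- A2
    simp [A2, pr, QC, Fintype.sum_bool]
  · -- A4
    rw [A4, sens, cpr, cpr]
    congr 1 <;> simp [pr, QC, Fintype.sum_bool]
  · rw [hγQ]; exact hγpos
  · rw [hζQ]; exact hζpos
  · rw [hτQ]; exact one_pos
  · rw [hγQ, hsQ]; exact hγσ
  · rw [hsQ]; exact hσ1
  · -- SameData cells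
    intro y0 z0
    cases y0 <;> cases z0
    · rw [cell_ff P, cell_ff (QC P a), q00_atoms (QC P a), hτQ]; simp [QC]
    · rw [cell_ft P, cell_ft (QC P a), q01_atoms (QC P a), hτQ]; simp [QC]
    · rw [cell_tf P, cell_tf (QC P a), q10_atoms (QC P a), hτQ]; simp [QC]
    · rw [cell_tt P, cell_tt (QC P a), q11_atoms (QC P a), hτQ]; simp [QC]
  · -- the value
    rw [cpr_t_eq, hτQ, div_one]
    simp [pr, QC, Fintype.sum_bool]
end Aux

/-- for every distribution consistent with the data, the joint probability
`P(x=0, z=0 | t=1)` satisfies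
`max{0, P(y=0,z=0|t=1) − χ̄(1−σ)} ≤ P(x=0,z=0|t=1) ≤ min{1−χ̄, P(y=0,z=0|t=1)}` with
`χ̄ = γ/σ`, and these bounds are sharp. -/
theorem statement8 (P : Dist) (h : Setup P) :
    (∀ Q : Dist, Consistent P Q →
      max 0 (q00 P - chibar P * (1 - sens P)) ≤
          cpr Q (fun x _ z _ => !x && !z) (fun _ _ _ t => t) ∧
        cpr Q (fun x _ z _ => !x && !z) (fun _ _ _ t => t) ≤
          min (1 - chibar P) (q00 P)) ∧
    (∃ Q : Dist, Consistent P Q ∧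
      cpr Q (fun x _ z _ => !x && !z) (fun _ _ _ t => t) =
        max 0 (q00 P - chibar P * (1 - sens P))) ∧
    (∃ Q : Dist, Consistent P Q ∧
      cpr Q (fun x _ z _ => !x && !z) (fun _ _ _ t => t) =
        min (1 - chibar P) (q00 P)) := by
  obtain ⟨hσpos, hχσ, hχpos, hχ1, hγq, hζq, hsum, h11, h10, h01, h00⟩ := setup_facts P h
  have hσ1 : sens P ≤ 1 := h.2.2.2.2.2.2.2.2.2
  have hcnn : 0 ≤ chibar P * (1 - sens P) := mul_nonneg hχpos.le (by linarith)
  have hc : chibar P * (1 - sens P) = chibar P - gamma P := by linear_combination -hχσ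
  refine ⟨?_, ?_, ?_⟩
  · -- the bounds
    rintro Q ⟨hQs, hQcells, hQsens⟩
    obtain ⟨hpmfQ, htlQ, hA1Q, hA2Q, hA4Q, hγQpos, hζQpos, hτQpos, hγσQ, hσ1Q⟩ := hQs
    have hτne : tau Q ≠ 0 := ne_of_gt hτQpos
    -- A2 atoms for Q
    have h2 : pr Q (fun x y _ _ => (!x && y : Bool)) = 0 := hA2Q
    simp [pr, Fintype.sum_bool] at h2
    have n1 := hpmfQ.1 false true true true
    have n2 := hpmfQ.1 false true true false
    have n3 := hpmfQ.1 false true false true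
    have n4 := hpmfQ.1 false true false false
    have z1 : Q false true true true = 0 := by linarith
    have z3 : Q false true false true = 0 := by linarith
    -- cell equations
    have c11 := hQcells true true
    rw [cell_tt P, cell_tt Q, q11_atoms Q, div_eq_iff hτne] at c11
    have c10 := hQcells true false
    rw [cell_tf P, cell_tf Q, q10_atoms Q, div_eq_iff hτne] at c10
    have c00 := hQcells false false
    rw [cell_ff P, cell_ff Q, q00_atoms Q, div_eq_iff hτne] at c00
    -- A4 for Q
    have h4 : cpr Q (fun _ y _ _ => y) (fun x _ _ t => (x && t : Bool)) = sens P := by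
      rw [← hQsens]; exact hA4Q
    simp only [cpr] at h4
    have hnumatoms : pr Q (fun x y z t => (y && (x && t) : Bool)) =
        Q true true true true + Q true true false true := by
      simp [pr, Fintype.sum_bool]
    have hnum : pr Q (fun x y z t => (y && (x && t) : Bool)) = gamma P * tau Q := by
      rw [hnumatoms]
      linear_combination c11 + c10 - z1 - z3 + tau Q * hγq
    have hdenne : pr Q (fun x y z t => (x && t : Bool)) ≠ 0 := by
      intro h0; rw [h0, div_zero] at h4; exact (ne_of_gt hσpos) h4.symm
    rw [hnum, div_eq_iff hdenne] at h4
    have hden : pr Q (fun x y z t => (x && t : Bool)) = chibar P * tau Q := by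
      apply mul_left_cancel₀ (ne_of_gt hσpos)
      linear_combination -h4 - tau Q * hχσ
    have hdenatoms : pr Q (fun x y z t => (x && t : Bool)) =
        Q true true true true + Q true true false true + Q true false true true +
          Q true false false true := by
      simp [pr, Fintype.sum_bool]; ring
    rw [hdenatoms] at hden
    rw [hnumatoms] at hnum
    have hτatoms := tau_atoms Q
    have hgoal : cpr Q (fun x _ z _ => (!x && !z : Bool)) (fun _ _ _ t => t) =
        (Q false true false true + Q false false false true) / tau Q := by
      rw [cpr_t_eq]; congr 1; simp [pr, Fintype.sum_bool]
    rw [hgoal]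
    have m1 := hpmfQ.1 true false true true
    have m2 := hpmfQ.1 false false false true
    have m3 := hpmfQ.1 true false false true
    have m4 := hpmfQ.1 false false true true
    constructor
    · apply max_le
      · exact div_nonneg (by linarith) hτQpos.le
      · rw [le_div_iff₀ hτQpos]
        have e1 : (q00 P - chibar P * (1 - sens P)) * tau Q =
            q00 P * tau Q - chibar P * tau Q + gamma P * tau Q := by
          linear_combination tau Q * hχσ
        linarith [c00, hden, hnum]
    · apply le_min
      · rw [div_le_iff₀ hτQpos]
        have e3 : (1 - chibar P) * tau Q = tau Q - chibar P * tau Q := by ring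
        linarith [hτatoms, hden]
      · rw [div_le_iff₀ hτQpos]
        linarith [c00]
  · -- lower bound attained
    have hb1 : chibar P * (1 - sens P) - min (q00 P) (chibar P * (1 - sens P)) ≤ q01 P := by
      rcases le_total (q00 P) (chibar P * (1 - sens P)) with hle | hle
      · rw [min_eq_left hle]; linarith
      · rw [min_eq_right hle]; linarith
    obtain ⟨hcon, hval⟩ := QC_main P h (min (q00 P) (chibar P * (1 - sens P)))
      (le_min h00 hcnn) (min_le_left _ _) (sub_nonneg.mpr (min_le_right _ _)) hb1
    refine ⟨QC P (min (q00 P) (chibar P * (1 - sens P))), hcon, ?_⟩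
    rw [hval]
    rcases le_total (q00 P) (chibar P * (1 - sens P)) with hle | hle
    · rw [min_eq_left hle, max_eq_left (by linarith)]; ring
    · rw [min_eq_right hle, max_eq_right (by linarith)]
  · -- upper bound attained
    have ha1 : max 0 (q00 P - (1 - chibar P)) ≤ q00 P := max_le h00 (by linarith)
    have hb0 : 0 ≤ chibar P * (1 - sens P) - max 0 (q00 P - (1 - chibar P)) := by
      rcases le_total (q00 P - (1 - chibar P)) 0 with hle | hle
      · rw [max_eq_left hle]; linarith
      · rw [max_eq_right hle]; linarith
    have hb1 : chibar P * (1 - sens P) - max 0 (q00 P - (1 - chibar P)) ≤ q01 P := by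
      rcases le_total (q00 P - (1 - chibar P)) 0 with hle | hle
      · rw [max_eq_left hle]; linarith
      · rw [max_eq_right hle]; linarith
    obtain ⟨hcon, hval⟩ := QC_main P h (max 0 (q00 P - (1 - chibar P)))
      (le_max_left _ _) ha1 hb0 hb1
    refine ⟨QC P (max 0 (q00 P - (1 - chibar P))), hcon, ?_⟩
    rw [hval]
    rcases le_total (q00 P - (1 - chibar P)) 0 with hle | hle
    · rw [max_eq_left hle, min_eq_right (by linarith)]; ring
    · rw [max_eq_right hle, min_eq_left (by linarith)]; ring

end PaperTest
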